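/- Let n be prime and let x_1, ..., x_n be positive reals, not all equal. Let i be the unique index such that the forward string SA(i) = x_i...x_n x_1...x_{i-1} is a Lyndon word, and let j be the unique index such that the backward string x_{j-1}...x_1 x_n...x_j is a Lyndon word. Then the set LWS of starting robots determined by these two strings has exactly two elements (i.e., the two distinguished robots are distinct). -/

import Mathlib

/-! The first letter of a Lyndon word of length at least two is smaller than its last letter.
If the two robots coincided, the forward word would give `x i < x (i - 1)` and the backward word
`x (i - 1) < x i`. -/

def IsLyndon (w : List ℝ) : Prop :=
  w ≠ [] ∧ ∀ j, 0 < j → j < w.length → List.Lex (· < ·) w (w.rotate j)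

theorem List.Lex.append_of_length_eq {α : Type*} {r : α → α → Prop} {u v : List α}
    (h : List.Lex r u v) (hlen : u.length = v.length) (s t : List α) :
    List.Lex r (u ++ s) (v ++ t) := by
  induction h with
  | nil => simp at hlen
  | rel hab => exact .rel hab
  | cons _ ih => exact .cons (ih (by simpa using hlen))

/-- If both end letters were `a`, the rotation to the right would give `s ++ [a] < a :: s`, making
the rotation to the left, `s ++ [a, a]`, smaller than the word. -/
theorem IsLyndon.head_lt_last {a z : ℝ} {s : List ℝ} (hw : IsLyndon (a :: (s ++ [z]))) :
    a < z := by
  have hright := hw.2 (s.length + 1) (by omega) (by simp)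
  have hleft := hw.2 1 one_pos (by simp)
  have hrot : (a :: (s ++ [z])).rotate (s.length + 1) = z :: a :: s := by
    rw [← List.cons_append, List.rotate_eq_drop_append_take (by simp)]
    simp
  rw [hrot, List.cons_lex_cons_iff] at hright
  rw [List.rotate_cons_succ, List.rotate_zero] at hleft
  rcases hright with hlt | ⟨rfl, hlex⟩
  · exact hlt
  · have hback : List.Lex (· < ·) ((s ++ [a]) ++ [a]) (a :: (s ++ [a])) := by
      simpa using hlex.append_of_length_eq (by simp) [a] [a]
    exact (asymm hleft hback).elim

theorem IsLyndon.apply_zero_lt_apply_neg_one {n : ℕ} [NeZero n] (hn : 1 < n) {f : Fin n → ℝ}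
    (hf : IsLyndon (List.ofFn f)) : f 0 < f (-1) := by
  obtain ⟨m, rfl⟩ : ∃ m, n = m + 2 := ⟨n - 2, by omega⟩
  rw [List.ofFn_succ, List.ofFn_succ', List.concat_eq_append] at hf
  have hlast : Fin.last (m + 1) = -1 := Fin.ext (by simp)
  simpa [hlast] using hf.head_lt_last

theorem lyndon_forward_backward_distinct_general (n : ℕ) [NeZero n] (hp : n.Prime)
    (x : Fin n → ℝ)
    (i j : Fin n)
    (hi : IsLyndon (List.ofFn (fun k : Fin n => x (i + k))))
    (hj : IsLyndon (List.ofFn (fun k : Fin n => x (j - 1 - k)))) :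
    i ≠ j := by
  rintro rfl
  have hforward := hi.apply_zero_lt_apply_neg_one hp.one_lt
  have hbackward := hj.apply_zero_lt_apply_neg_one hp.one_lt
  simp only [add_zero, sub_zero, sub_neg_eq_add, sub_add_cancel, ← sub_eq_add_neg]
    at hforward hbackward
  exact lt_asymm hforward hbackward

/-- For n prime and positive reals x_1,...,x_n not all equal, the
robot whose forward string of angles is a Lyndon word and the robot whose
backward string of angles is a Lyndon word are distinct; hence |LWS| = 2. -/
theorem lyndon_forward_backward_distinct (n : ℕ) [NeZero n] (hp : n.Prime)
    (x : Fin n → ℝ) (hpos : ∀ i, 0 < x i)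
    (hne : ¬ ∀ i j, x i = x j)
    (i j : Fin n)
    (hi : IsLyndon (List.ofFn (fun k : Fin n => x (i + k))))
    (hj : IsLyndon (List.ofFn (fun k : Fin n => x (j - 1 - k)))) :
    i ≠ j :=
  lyndon_forward_backward_distinct_general n hp x i j hi hj
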